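/- If A is a symmetric positive definite n × n real matrix and b ∈ ℝⁿ, then the linear complementarity problem u ≥ 0, Au − b ≥ 0, ⟨u, Au − b⟩ = 0 has a unique solution, and it is the unique minimizer of J(v) = (1/2)⟨Av, v⟩ − ⟨b, v⟩ over the nonnegative orthant. -/

import Mathlib

open Matrix

private lemma lcp_dot_symm {n : ℕ} (A : Matrix (Fin n) (Fin n) ℝ) (hsymm : A.IsSymm)
    (u w : Fin n → ℝ) : A.mulVec w ⬝ᵥ u = A.mulVec u ⬝ᵥ w := by
  rw [dotProduct_comm, dotProduct_mulVec]
  conv_lhs => rw [← hsymm]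
  rw [vecMul_transpose]

private lemma lcp_contQ {n : ℕ} (A : Matrix (Fin n) (Fin n) ℝ) :
    Continuous fun v : Fin n → ℝ => A.mulVec v ⬝ᵥ v := by
  simp only [dotProduct, mulVec]
  exact continuous_finset_sum _ fun i _ =>
    (continuous_finset_sum _ fun j _ => (continuous_const.mul (continuous_apply j))).mul
      (continuous_apply i)

private lemma lcp_contD {n : ℕ} (b : Fin n → ℝ) :
    Continuous fun v : Fin n → ℝ => b ⬝ᵥ v := by
  simp only [dotProduct]
  exact continuous_finset_sum _ fun j _ => continuous_const.mul (continuous_apply j)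

private lemma lcp_contSelf {n : ℕ} :
    Continuous fun v : Fin n → ℝ => v ⬝ᵥ v := by
  simp only [dotProduct]
  exact continuous_finset_sum _ fun j _ => (continuous_apply j).mul (continuous_apply j)

private lemma lcp_self_nonneg {n : ℕ} (v : Fin n → ℝ) : 0 ≤ v ⬝ᵥ v :=
  Finset.sum_nonneg fun _ _ => mul_self_nonneg _

private lemma lcp_compactS {n : ℕ} (R : ℝ) (hR : 0 ≤ R) :
    IsCompact {v : Fin n → ℝ | (∀ i, 0 ≤ v i) ∧ v ⬝ᵥ v ≤ R ^ 2} := by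
  have hclosed : IsClosed {v : Fin n → ℝ | (∀ i, 0 ≤ v i) ∧ v ⬝ᵥ v ≤ R ^ 2} := by
    have h1 : IsClosed {v : Fin n → ℝ | ∀ i, 0 ≤ v i} := by
      have : {v : Fin n → ℝ | ∀ i, 0 ≤ v i} = ⋂ i, {v : Fin n → ℝ | 0 ≤ v i} := by
        ext v; simp
      rw [this]
      exact isClosed_iInter fun i => isClosed_le continuous_const (continuous_apply i)
    exact h1.inter (isClosed_le lcp_contSelf continuous_const)
  refine (isCompact_closedBall (0 : Fin n → ℝ) R).of_isClosed_subset hclosed ?_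
  rintro v ⟨-, hv⟩
  rw [Metric.mem_closedBall, dist_zero_right]
  refine (pi_norm_le_iff_of_nonneg hR).2 fun i => ?_
  have h1 : v i * v i ≤ v ⬝ᵥ v :=
    Finset.single_le_sum (f := fun j => v j * v j) (fun j _ => mul_self_nonneg _)
      (Finset.mem_univ i)
  have : |v i| ≤ R := by nlinarith [abs_nonneg (v i), abs_mul_abs_self (v i)]
  simpa using this

private lemma lcp_pd_bound {n : ℕ} (A : Matrix (Fin n) (Fin n) ℝ)
    (hpd : ∀ v : Fin n → ℝ, v ≠ 0 → 0 < A.mulVec v ⬝ᵥ v) :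
    ∃ c : ℝ, 0 < c ∧ ∀ v, c * (v ⬝ᵥ v) ≤ A.mulVec v ⬝ᵥ v := by
  rcases isEmpty_or_nonempty (Fin n) with hn | hn
  · exact ⟨1, one_pos, fun v => by simp [dotProduct]⟩
  · set S := {v : Fin n → ℝ | v ⬝ᵥ v = 1} with hS
    have hcomp : IsCompact S := by
      have hclosed : IsClosed S := isClosed_eq lcp_contSelf continuous_const
      refine (isCompact_closedBall (0 : Fin n → ℝ) 1).of_isClosed_subset hclosed ?_
      intro v hv
      rw [Metric.mem_closedBall, dist_zero_right]
      refine (pi_norm_le_iff_of_nonneg one_pos.le).2 fun i => ?_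
      have h1 : v i * v i ≤ v ⬝ᵥ v :=
        Finset.single_le_sum (f := fun j => v j * v j) (fun j _ => mul_self_nonneg _)
          (Finset.mem_univ i)
      rw [hv] at h1
      have : |v i| ≤ 1 := by nlinarith [abs_nonneg (v i), abs_mul_abs_self (v i)]
      simpa using this
    have hne : S.Nonempty := by
      refine ⟨Pi.single (Classical.arbitrary (Fin n)) 1, ?_⟩
      simp [hS, single_dotProduct]
    obtain ⟨v₀, hv₀S, hmin⟩ := hcomp.exists_isMinOn hne (lcp_contQ A).continuousOn
    have hv₀ : v₀ ≠ 0 := by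
      intro h
      rw [hS] at hv₀S
      simp only [Set.mem_setOf_eq, h] at hv₀S
      simp at hv₀S
    refine ⟨A.mulVec v₀ ⬝ᵥ v₀, hpd v₀ hv₀, fun v => ?_⟩
    by_cases hv : v = 0
    · simp [hv]
    · have hq : 0 < v ⬝ᵥ v :=
        lt_of_le_of_ne (lcp_self_nonneg v) fun h => hv (dotProduct_self_eq_zero.mp h.symm)
      set s := Real.sqrt (v ⬝ᵥ v) with hsdef
      have hs : 0 < s := Real.sqrt_pos.mpr hq
      have hs2 : s ^ 2 = v ⬝ᵥ v := Real.sq_sqrt hq.le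
      have hv'S : (s⁻¹ • v) ∈ S := by
        simp only [hS, Set.mem_setOf_eq, smul_dotProduct, dotProduct_smul, smul_eq_mul]
        field_simp
        nlinarith
      have hthis := isMinOn_iff.mp hmin _ hv'S
      rw [mulVec_smul, smul_dotProduct, dotProduct_smul, smul_eq_mul, smul_eq_mul] at hthis
      have h3 := mul_le_mul_of_nonneg_left hthis (mul_pos hs hs).le
      have h4 : s * s * (s⁻¹ * (s⁻¹ * (A.mulVec v ⬝ᵥ v))) = A.mulVec v ⬝ᵥ v := by
        field_simp
      have h5 : s * s = v ⬝ᵥ v := by nlinarith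
      rw [← h5]
      linarith

private lemma lcp_J_expand {n : ℕ} (A : Matrix (Fin n) (Fin n) ℝ) (hsymm : A.IsSymm)
    (b : Fin n → ℝ) (J : (Fin n → ℝ) → ℝ)
    (hJ : ∀ v, J v = (1 / 2) * (A.mulVec v ⬝ᵥ v) - b ⬝ᵥ v)
    (u w : Fin n → ℝ) (t : ℝ) :
    J (u + t • w) = J u + t * ((A.mulVec u - b) ⬝ᵥ w) + t ^ 2 / 2 * (A.mulVec w ⬝ᵥ w) := by
  simp only [hJ, mulVec_add, mulVec_smul, add_dotProduct, dotProduct_add, smul_dotProduct,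
    dotProduct_smul, sub_dotProduct, smul_eq_mul, lcp_dot_symm A hsymm u w]
  ring

private lemma lcp_min_imp {n : ℕ} (A : Matrix (Fin n) (Fin n) ℝ) (hsymm : A.IsSymm)
    (hpd : ∀ v : Fin n → ℝ, v ≠ 0 → 0 < A.mulVec v ⬝ᵥ v)
    (b : Fin n → ℝ) (J : (Fin n → ℝ) → ℝ)
    (hJ : ∀ v, J v = (1 / 2) * (A.mulVec v ⬝ᵥ v) - b ⬝ᵥ v)
    (u : Fin n → ℝ) (hu : ∀ i, 0 ≤ u i)
    (hmin : ∀ v, (∀ i, 0 ≤ v i) → J u ≤ J v) :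
    (∀ i, 0 ≤ (A.mulVec u - b) i) ∧ u ⬝ᵥ (A.mulVec u - b) = 0 := by
  have hVI : ∀ v, (∀ i, 0 ≤ v i) → 0 ≤ (A.mulVec u - b) ⬝ᵥ (v - u) := by
    intro v hv
    set w := v - u with hw
    set α := (A.mulVec u - b) ⬝ᵥ w with hα
    set β := A.mulVec w ⬝ᵥ w with hβ
    have hβ0 : 0 ≤ β := by
      by_cases h : w = 0
      · simp [hβ, h]
      · exact (hpd w h).le
    have key : ∀ t : ℝ, 0 < t → t ≤ 1 → 0 ≤ t * α + t ^ 2 / 2 * β := by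
      intro t ht ht1
      have hmem : ∀ i, 0 ≤ (u + t • w) i := by
        intro i
        simp only [Pi.add_apply, Pi.smul_apply, hw, Pi.sub_apply, smul_eq_mul]
        nlinarith [mul_nonneg (sub_nonneg.mpr ht1) (hu i), mul_nonneg ht.le (hv i)]
      have h1 := hmin _ hmem
      rw [lcp_J_expand A hsymm b J hJ u w t] at h1
      linarith
    by_contra hcon
    push_neg at hcon
    rcases le_or_gt β 0 with hβ' | hβ'
    · have := key 1 one_pos le_rfl; nlinarith
    · have ht0 : 0 < min 1 (-α / β) := lt_min one_pos (div_pos (by linarith) hβ')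
      have hk := key _ ht0 (min_le_left _ _)
      have h2 : min 1 (-α / β) ≤ -α / β := min_le_right _ _
      set t := min 1 (-α / β) with htdef
      have h3 : t * β ≤ -α := (le_div_iff₀ hβ').mp h2
      nlinarith
  have hineq : ∀ i, 0 ≤ (A.mulVec u - b) i := by
    intro i
    have hvmem : ∀ j, 0 ≤ (u + (Pi.single i 1 : Fin n → ℝ)) j := by
      intro j
      simp only [Pi.add_apply]
      have : (0 : ℝ) ≤ (Pi.single i 1 : Fin n → ℝ) j := by
        rcases eq_or_ne j i with h | h
        · subst h; simp
        · simp [Pi.single_eq_of_ne h]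
      linarith [hu j]
    have := hVI _ hvmem
    rwa [add_sub_cancel_left, dotProduct_single, mul_one] at this
  refine ⟨hineq, ?_⟩
  have h1 := hVI 0 fun i => le_rfl
  rw [zero_sub, dotProduct_neg] at h1
  have h2 : 0 ≤ u ⬝ᵥ (A.mulVec u - b) :=
    Finset.sum_nonneg fun i _ => mul_nonneg (hu i) (hineq i)
  rw [dotProduct_comm] at h2
  have h3 : (A.mulVec u - b) ⬝ᵥ u = 0 := le_antisymm (by linarith) h2
  rw [dotProduct_comm]
  exact h3

private lemma lcp_uniq {n : ℕ} (A : Matrix (Fin n) (Fin n) ℝ)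
    (hpd : ∀ v : Fin n → ℝ, v ≠ 0 → 0 < A.mulVec v ⬝ᵥ v)
    (b : Fin n → ℝ) {u w : Fin n → ℝ}
    (hw : (∀ i, 0 ≤ w i) ∧ (∀ i, 0 ≤ (A.mulVec w - b) i) ∧ w ⬝ᵥ (A.mulVec w - b) = 0)
    (hu : (∀ i, 0 ≤ u i) ∧ (∀ i, 0 ≤ (A.mulVec u - b) i) ∧ u ⬝ᵥ (A.mulVec u - b) = 0) :
    w = u := by
  have e : A.mulVec (w - u) ⬝ᵥ (w - u)
      = ((A.mulVec w - b) ⬝ᵥ w - (A.mulVec w - b) ⬝ᵥ u)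
        + ((A.mulVec u - b) ⬝ᵥ u - (A.mulVec u - b) ⬝ᵥ w) := by
    simp only [mulVec_sub, sub_dotProduct, dotProduct_sub]
    ring
  have h1 : (A.mulVec w - b) ⬝ᵥ w = 0 := by rw [dotProduct_comm]; exact hw.2.2
  have h2 : (A.mulVec u - b) ⬝ᵥ u = 0 := by rw [dotProduct_comm]; exact hu.2.2
  have h3 : 0 ≤ (A.mulVec w - b) ⬝ᵥ u :=
    Finset.sum_nonneg fun i _ => mul_nonneg (hw.2.1 i) (hu.1 i)
  have h4 : 0 ≤ (A.mulVec u - b) ⬝ᵥ w :=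
    Finset.sum_nonneg fun i _ => mul_nonneg (hu.2.1 i) (hw.1 i)
  have key : A.mulVec (w - u) ⬝ᵥ (w - u) ≤ 0 := by rw [e]; linarith
  by_contra hne
  exact absurd key (not_le.mpr (hpd _ (sub_ne_zero.mpr hne)))

/-- For a symmetric positive definite matrix `A` and `b ∈ ℝⁿ`, the linear
complementarity problem has a unique solution, which is the unique minimizer
of `J v = (1/2)⟨Av, v⟩ - ⟨b, v⟩` over the nonnegative orthant. -/
theorem lcp_unique_solution_min {n : ℕ} (A : Matrix (Fin n) (Fin n) ℝ)
    (hsymm : A.IsSymm) (hpd : ∀ v : Fin n → ℝ, v ≠ 0 → 0 < A.mulVec v ⬝ᵥ v)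
    (b : Fin n → ℝ)
    (J : (Fin n → ℝ) → ℝ)
    (hJ : ∀ v, J v = (1 / 2) * (A.mulVec v ⬝ᵥ v) - b ⬝ᵥ v) :
    ∃ u : Fin n → ℝ,
      ((∀ i, 0 ≤ u i) ∧ (∀ i, 0 ≤ (A.mulVec u - b) i) ∧
        u ⬝ᵥ (A.mulVec u - b) = 0) ∧
      (∀ w : Fin n → ℝ,
        ((∀ i, 0 ≤ w i) ∧ (∀ i, 0 ≤ (A.mulVec w - b) i) ∧
          w ⬝ᵥ (A.mulVec w - b) = 0) → w = u) ∧
      (∀ v : Fin n → ℝ, (∀ i, 0 ≤ v i) → J u ≤ J v) ∧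
      (∀ w : Fin n → ℝ, (∀ i, 0 ≤ w i) →
        (∀ v : Fin n → ℝ, (∀ i, 0 ≤ v i) → J w ≤ J v) → w = u) := by
  obtain ⟨c, hc, hcb⟩ := lcp_pd_bound A hpd
  set B := Real.sqrt (b ⬝ᵥ b) with hBdef
  have hB0 : 0 ≤ B := Real.sqrt_nonneg _
  set R : ℝ := 2 * B / c + 1 with hRdef
  have hR0 : 0 < R := by positivity
  set S := {v : Fin n → ℝ | (∀ i, 0 ≤ v i) ∧ v ⬝ᵥ v ≤ R ^ 2} with hSdef
  have hScomp : IsCompact S := lcp_compactS R hR0.le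
  have hS0 : (0 : Fin n → ℝ) ∈ S := ⟨fun i => le_rfl, by simp; positivity⟩
  have hJcont : Continuous J := by
    have : J = fun v => (1 / 2) * (A.mulVec v ⬝ᵥ v) - b ⬝ᵥ v := funext hJ
    rw [this]
    exact (continuous_const.mul (lcp_contQ A)).sub (lcp_contD b)
  obtain ⟨u, huS, humin⟩ := hScomp.exists_isMinOn ⟨0, hS0⟩ hJcont.continuousOn
  have hJ0 : J 0 = 0 := by simp [hJ]
  have hglobal : ∀ v, (∀ i, 0 ≤ v i) → J u ≤ J v := by
    intro v hv
    by_cases hvS : v ⬝ᵥ v ≤ R ^ 2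
    · exact isMinOn_iff.mp humin v ⟨hv, hvS⟩
    · push_neg at hvS
      have hJu0 : J u ≤ 0 := hJ0 ▸ isMinOn_iff.mp humin 0 hS0
      set t := Real.sqrt (v ⬝ᵥ v) with htdef
      have hq0 : 0 ≤ v ⬝ᵥ v := lcp_self_nonneg v
      have ht2 : t ^ 2 = v ⬝ᵥ v := Real.sq_sqrt hq0
      have htR : R < t := by
        have := Real.sqrt_lt_sqrt (sq_nonneg R) hvS
        rwa [Real.sqrt_sq hR0.le] at this
      have ht0 : 0 < t := lt_trans hR0 htR
      have hCS : b ⬝ᵥ v ≤ B * t := by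
        have h := Real.sum_mul_le_sqrt_mul_sqrt Finset.univ b v
        have hb : Real.sqrt (∑ i, b i ^ 2) = B := by
          rw [hBdef]; congr 1; simp [dotProduct, sq]
        have hv2 : Real.sqrt (∑ i, v i ^ 2) = t := by
          rw [htdef]; congr 1; simp [dotProduct, sq]
        calc b ⬝ᵥ v = ∑ i, b i * v i := rfl
          _ ≤ _ := h
          _ = B * t := by rw [hb, hv2]
      have hlow : c * (v ⬝ᵥ v) ≤ A.mulVec v ⬝ᵥ v := hcb v
      rw [hJ v]
      have hcR : c * R = 2 * B + c := by rw [hRdef, mul_add, mul_div_assoc', mul_div_cancel_left₀ _ hc.ne', mul_one]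
      have hct : c * R < c * t := mul_lt_mul_of_pos_left htR hc
      have h1 : 0 < c * t / 2 - B := by linarith
      have h2 : 0 < t * (c * t / 2 - B) := mul_pos ht0 h1
      nlinarith
  obtain ⟨hAub, hcompl⟩ := lcp_min_imp A hsymm hpd b J hJ u huS.1 hglobal
  refine ⟨u, ⟨huS.1, hAub, hcompl⟩, ?_, hglobal, ?_⟩
  · intro w hw
    exact lcp_uniq A hpd b hw ⟨huS.1, hAub, hcompl⟩
  · intro w hw hwmin
    obtain ⟨h1, h2⟩ := lcp_min_imp A hsymm hpd b J hJ w hw hwmin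
    exact lcp_uniq A hpd b ⟨hw, h1, h2⟩ ⟨huS.1, hAub, hcompl⟩
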